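/- Let G be a group, ρ: G → GL₄(ℂ) a representation, and ν: G → ℂ* a homomorphism. Then Λ²(ρ ⊗ ν) ≅ Λ²(ρ) ⊗ ν², and if moreover Λ²(ρ ⊗ ν) ≅ Λ²(ρ), then ν¹² = 1. -/
import Mathlib

set_option maxRecDepth 10000
set_option maxHeartbeats 2000000

open Matrix

/-- The six index pairs `(i,j)` with `i < j` in `Fin 4`, in lexicographic order. -/
def pairIdx : Fin 6 → Fin 4 × Fin 4 :=
  ![(0, 1), (0, 2), (0, 3), (1, 2), (1, 3), (2, 3)]

/-- The second compound matrix of a 4×4 matrix `A`: the matrix of `Λ²(A)` on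
the 6-dimensional exterior square, whose `(I,J)` entry is the corresponding
2×2 minor of `A`. -/
def lambda2 {R : Type*} [CommRing R] (A : Matrix (Fin 4) (Fin 4) R) :
    Matrix (Fin 6) (Fin 6) R :=
  Matrix.of fun i j =>
    A (pairIdx i).1 (pairIdx j).1 * A (pairIdx i).2 (pairIdx j).2
      - A (pairIdx i).1 (pairIdx j).2 * A (pairIdx i).2 (pairIdx j).1

@[simp] lemma pairIdx0 : pairIdx 0 = (0,1) := rfl
@[simp] lemma pairIdx1 : pairIdx 1 = (0,2) := rfl
@[simp] lemma pairIdx2 : pairIdx 2 = (0,3) := rfl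
@[simp] lemma pairIdx3 : pairIdx 3 = (1,2) := rfl
@[simp] lemma pairIdx4 : pairIdx 4 = (1,3) := rfl
@[simp] lemma pairIdx5 : pairIdx 5 = (2,3) := rfl

/-- The second compound is multiplicative (Cauchy–Binet for 2×2 minors). -/
lemma lambda2_mul {R : Type*} [CommRing R] (A B : Matrix (Fin 4) (Fin 4) R) :
    lambda2 (A * B) = lambda2 A * lambda2 B := by
  ext i j
  fin_cases i <;> fin_cases j <;>
    simp [lambda2, Matrix.mul_apply, Fin.sum_univ_six, Fin.sum_univ_four] <;> ring

lemma lambda2_one {R : Type*} [CommRing R] :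
    lambda2 (1 : Matrix (Fin 4) (Fin 4) R) = 1 := by
  ext i j
  fin_cases i <;> fin_cases j <;>
    simp [lambda2, Matrix.one_apply]

/-- Let `ρ : G → GL₄(ℂ)` be a 4-dimensional representation and `ν : G → ℂ*` a
homomorphism.  Then `Λ²(ρ ⊗ ν) = Λ²(ρ) ⊗ ν²`, and if moreover `Λ²(ρ ⊗ ν)` is
isomorphic to `Λ²(ρ)`, then `ν¹² = 1`. -/
theorem lambda2_twist {G : Type*} [Group G] (ρ : G →* GL (Fin 4) ℂ) (ν : G →* ℂˣ) :
    (∀ g : G, lambda2 ((ν g : ℂ) • (ρ g : Matrix (Fin 4) (Fin 4) ℂ))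
        = ((ν g : ℂ))^2 • lambda2 (ρ g : Matrix (Fin 4) (Fin 4) ℂ)) ∧
    ((∃ T : GL (Fin 6) ℂ, ∀ g : G,
        lambda2 ((ν g : ℂ) • (ρ g : Matrix (Fin 4) (Fin 4) ℂ))
          = (T : Matrix (Fin 6) (Fin 6) ℂ) * lambda2 (ρ g : Matrix (Fin 4) (Fin 4) ℂ)
              * (T⁻¹ : GL (Fin 6) ℂ)) →
      ∀ g : G, (ν g : ℂ) ^ 12 = 1) := by
  have h1 : ∀ g : G, lambda2 ((ν g : ℂ) • (ρ g : Matrix (Fin 4) (Fin 4) ℂ))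
      = ((ν g : ℂ))^2 • lambda2 (ρ g : Matrix (Fin 4) (Fin 4) ℂ) := by
    intro g
    ext i j
    simp only [lambda2, Matrix.smul_apply, Matrix.of_apply, smul_eq_mul]
    ring
  refine ⟨h1, ?_⟩
  rintro ⟨T, hT⟩ g
  have hmul : lambda2 (ρ g : Matrix (Fin 4) (Fin 4) ℂ)
      * lambda2 (((ρ g)⁻¹ : GL (Fin 4) ℂ) : Matrix (Fin 4) (Fin 4) ℂ) = 1 := by
    rw [← lambda2_mul]
    have h : (ρ g : Matrix (Fin 4) (Fin 4) ℂ)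
        * (((ρ g)⁻¹ : GL (Fin 4) ℂ) : Matrix (Fin 4) (Fin 4) ℂ) = 1 := by
      exact Units.mul_inv (ρ g)
    rw [h, lambda2_one]
  have hdetM : (lambda2 (ρ g : Matrix (Fin 4) (Fin 4) ℂ)).det ≠ 0 := by
    intro h0
    have := congrArg Matrix.det hmul
    rw [Matrix.det_mul, h0, zero_mul, Matrix.det_one] at this
    exact zero_ne_one this
  have hTdet : ((T : Matrix (Fin 6) (Fin 6) ℂ)).det
      * ((T⁻¹ : GL (Fin 6) ℂ) : Matrix (Fin 6) (Fin 6) ℂ).det = 1 := by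
    rw [← Matrix.det_mul]
    have h : (T : Matrix (Fin 6) (Fin 6) ℂ)
        * ((T⁻¹ : GL (Fin 6) ℂ) : Matrix (Fin 6) (Fin 6) ℂ) = 1 := by
      exact Units.mul_inv T
    rw [h, Matrix.det_one]
  have key := congrArg Matrix.det ((h1 g).symm.trans (hT g))
  rw [Matrix.det_smul, Matrix.det_mul, Matrix.det_mul] at key
  have hcard : Fintype.card (Fin 6) = 6 := by simp
  rw [hcard] at key
  have h12 : ((ν g : ℂ))^12 * (lambda2 (ρ g : Matrix (Fin 4) (Fin 4) ℂ)).det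
      = (lambda2 (ρ g : Matrix (Fin 4) (Fin 4) ℂ)).det := by
    calc ((ν g : ℂ))^12 * (lambda2 (ρ g : Matrix (Fin 4) (Fin 4) ℂ)).det
        = (((ν g : ℂ))^2)^6 * (lambda2 (ρ g : Matrix (Fin 4) (Fin 4) ℂ)).det := by ring
      _ = (T : Matrix (Fin 6) (Fin 6) ℂ).det * (lambda2 (ρ g : Matrix (Fin 4) (Fin 4) ℂ)).det
            * ((T⁻¹ : GL (Fin 6) ℂ) : Matrix (Fin 6) (Fin 6) ℂ).det := key
      _ = (lambda2 (ρ g : Matrix (Fin 4) (Fin 4) ℂ)).det := by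
          rw [mul_comm ((T : Matrix (Fin 6) (Fin 6) ℂ)).det, mul_assoc, hTdet, mul_one]
  exact mul_right_cancel₀ hdetM (h12.trans (one_mul _).symm)
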